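/- (RTTR is an IPCW estimator.) For every real t with 0 ≤ t < τ, 1 − Ŝ_RTTR(t) = F̂_IPCW(t). Moreover, if ΔN(τ) = Y(τ) (all observations at the last observation time are failures), then 1 − Ŝ_RTTR(t) = F̂_IPCW(t) and Ŝ_RTTR(t) = S̃_IPCW(t) for every t ≥ 0. -/

import Mathlib

open Finset
open scoped Classical

noncomputable section

namespace SurvStmt

/-- The finite set of distinct observed times `{X_1, …, X_n}`. -/
def times {n : ℕ} (X : Fin n → ℝ) : Finset ℝ := Finset.image X Finset.univ

/-- `Y(t) = #{i : X_i ≥ t}`, as a real number. -/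
def Yat {n : ℕ} (X : Fin n → ℝ) (t : ℝ) : ℝ :=
  ((Finset.univ.filter (fun i => t ≤ X i)).card : ℝ)

/-- `Y(t+) = #{i : X_i > t}`, as a real number. -/
def Yplus {n : ℕ} (X : Fin n → ℝ) (t : ℝ) : ℝ :=
  ((Finset.univ.filter (fun i => t < X i)).card : ℝ)

/-- `ΔN(t) = #{i : X_i = t, D_i = 1}`, as a real number. -/
def dN {n : ℕ} (X : Fin n → ℝ) (D : Fin n → Bool) (t : ℝ) : ℝ :=
  ((Finset.univ.filter (fun i => X i = t ∧ D i = true)).card : ℝ)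

/-- `ΔC(t) = #{i : X_i = t, D_i = 0}`, as a real number. -/
def dC {n : ℕ} (X : Fin n → ℝ) (D : Fin n → Bool) (t : ℝ) : ℝ :=
  ((Finset.univ.filter (fun i => X i = t ∧ D i = false)).card : ℝ)

/-- `Y†(t) = Y(t) − ΔN(t)`. -/
def Ydag {n : ℕ} (X : Fin n → ℝ) (D : Fin n → Bool) (t : ℝ) : ℝ :=
  Yat X t - dN X D t

/-- `τ = max_i X_i`, the largest observation time (0 if there is no data). -/
def tau {n : ℕ} (X : Fin n → ℝ) : ℝ := ((times X).max).unbotD 0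

/-- Censoring product-limit estimator `K̂(t) = ∏_{u ≤ t} (1 − ΔC(u)/Y†(u))`. -/
def Khat {n : ℕ} (X : Fin n → ℝ) (D : Fin n → Bool) (t : ℝ) : ℝ :=
  ∏ u ∈ (times X).filter (fun u => u ≤ t), (1 - dC X D u / Ydag X D u)

/-- Left limit `K̂(t−) = ∏_{u < t} (1 − ΔC(u)/Y†(u))`. -/
def Kminus {n : ℕ} (X : Fin n → ℝ) (D : Fin n → Bool) (t : ℝ) : ℝ :=
  ∏ u ∈ (times X).filter (fun u => u < t), (1 - dC X D u / Ydag X D u)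

/-- Failure product-limit estimator `Ŝ_PL(t) = ∏_{u ≤ t} (1 − ΔN(u)/Y(u))`. -/
def SPL {n : ℕ} (X : Fin n → ℝ) (D : Fin n → Bool) (t : ℝ) : ℝ :=
  ∏ u ∈ (times X).filter (fun u => u ≤ t), (1 - dN X D u / Yat X u)

/-- Left limit `Ŝ_PL(t−) = ∏_{u < t} (1 − ΔN(u)/Y(u))`. -/
def SPLminus {n : ℕ} (X : Fin n → ℝ) (D : Fin n → Bool) (t : ℝ) : ℝ :=
  ∏ u ∈ (times X).filter (fun u => u < t), (1 - dN X D u / Yat X u)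

/-- IPCW estimator `F̂_IPCW(t) = (1/n) ∑_i D_i 1{X_i ≤ t} / K̂(X_i−)`. -/
def FIPCW {n : ℕ} (X : Fin n → ℝ) (D : Fin n → Bool) (t : ℝ) : ℝ :=
  (1 / (n : ℝ)) * ∑ i : Fin n,
    (if D i = true then (1 : ℝ) else 0) * (if X i ≤ t then (1 : ℝ) else 0) / Kminus X D (X i)

/-- IPCW survival estimator `S̃_IPCW(t) = (1/n) ∑_i D_i 1{X_i > t} / K̂(X_i−)`. -/
def SIPCW {n : ℕ} (X : Fin n → ℝ) (D : Fin n → Bool) (t : ℝ) : ℝ :=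
  (1 / (n : ℝ)) * ∑ i : Fin n,
    (if D i = true then (1 : ℝ) else 0) * (if t < X i then (1 : ℝ) else 0) / Kminus X D (X i)

/-- RTTR jump weight `J(v) = 1/(n · K̂(v−))`. -/
def Jw {n : ℕ} (X : Fin n → ℝ) (D : Fin n → Bool) (v : ℝ) : ℝ :=
  1 / ((n : ℝ) * Kminus X D v)

/-- Redistribute-to-the-right estimator
`Ŝ_RTTR(t) = 1 − ∑_{v ≤ t} [J(v) ΔN(v) 1{v < τ} + J(τ) Y(τ) 1{v = τ}]`. -/
def SRTTR {n : ℕ} (X : Fin n → ℝ) (D : Fin n → Bool) (t : ℝ) : ℝ :=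
  1 - ∑ v ∈ (times X).filter (fun v => v ≤ t),
      (Jw X D v * dN X D v * (if v < tau X then (1 : ℝ) else 0)
        + Jw X D (tau X) * Yat X (tau X) * (if v = tau X then (1 : ℝ) else 0))

/-! Grouping the IPCW sum by observed time gives `F̂_IPCW(t) = ∑_{v ≤ t} J(v) ΔN(v)`, which is
the RTTR sum term by term except at `v = τ`, where the RTTR weight `J(τ) Y(τ)` equals
`J(τ) ΔN(τ)` exactly when `ΔN(τ) = Y(τ)`. For the survival statement the IPCW weights must have
total mass one: by induction over the observed times, `∑_{v < s} J(v) ΔN(v) = 1 − J(s) Y(s)`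
whenever `Y(s) > 0`, and at `s = τ` the last jump `J(τ) ΔN(τ) = J(τ) Y(τ)` completes the sum. -/

section Estimators

variable {n : ℕ} {X : Fin n → ℝ} {D : Fin n → Bool}

lemma mem_times (i : Fin n) : X i ∈ times X :=
  Finset.mem_image_of_mem X (Finset.mem_univ i)

lemma tau_eq_max' (h : (times X).Nonempty) : tau X = (times X).max' h := by
  rw [tau, ← Finset.coe_max' h, WithBot.unbotD_coe]

lemma le_tau {v : ℝ} (hv : v ∈ times X) : v ≤ tau X := by
  rw [tau_eq_max' ⟨v, hv⟩]
  exact (times X).le_max' v hv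

lemma tau_mem (hn : 0 < n) : tau X ∈ times X := by
  have h : (times X).Nonempty := ⟨_, mem_times ⟨0, hn⟩⟩
  rw [tau_eq_max' h]
  exact (times X).max'_mem h

lemma Yat_pos_of_mem {v : ℝ} (hv : v ∈ times X) : 0 < Yat X v := by
  obtain ⟨i, -, rfl⟩ := Finset.mem_image.mp hv
  unfold Yat
  exact_mod_cast Finset.card_pos.mpr ⟨i, by simp⟩

lemma Ydag_eq_Yplus_add_dC (u : ℝ) :
    Ydag X D u = Yplus X u + dC X D u := by
  rw [Ydag, sub_eq_iff_eq_add]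
  simp only [Yat, Yplus, dN, dC, Finset.natCast_card_filter, ← Finset.sum_add_distrib]
  refine Finset.sum_congr rfl fun i _ => ?_
  rcases lt_trichotomy u (X i) with h | rfl | h
  · simp [h, h.le, h.ne']
  · cases D i <;> simp
  · simp [h.le, h.not_ge, h.ne]

lemma one_sub_dC_div_Ydag {u : ℝ} (h : Ydag X D u ≠ 0) :
    1 - dC X D u / Ydag X D u = Yplus X u / Ydag X D u := by
  rw [eq_div_iff h, sub_mul, div_mul_cancel₀ _ h, Ydag_eq_Yplus_add_dC]
  ring

lemma ipcw_sum_eq_sum_Jw_mul_dN (p : ℝ → Prop) [DecidablePred p] :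
    (1 / (n : ℝ)) * ∑ i : Fin n,
      (if D i = true then (1 : ℝ) else 0) * (if p (X i) then (1 : ℝ) else 0) / Kminus X D (X i)
      = ∑ v ∈ (times X).filter p, Jw X D v * dN X D v := by
  simp only [dN, Finset.natCast_card_filter, Finset.mul_sum]
  rw [Finset.sum_comm]
  refine Finset.sum_congr rfl fun i _ => ?_
  by_cases hd : D i = true
  · by_cases hp : p (X i) <;> simp [hd, hp, mem_times, Jw, mul_comm]
  · simp [hd]

lemma FIPCW_eq_sum (t : ℝ) :
    FIPCW X D t = ∑ v ∈ (times X).filter (· ≤ t), Jw X D v * dN X D v :=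
  ipcw_sum_eq_sum_Jw_mul_dN (· ≤ t)

lemma SIPCW_eq_sum (t : ℝ) :
    SIPCW X D t = ∑ v ∈ (times X).filter (t < ·), Jw X D v * dN X D v :=
  ipcw_sum_eq_sum_Jw_mul_dN (t < ·)

lemma Kminus_eq_one_of_filter_lt_eq_empty {s : ℝ} (h : (times X).filter (· < s) = ∅) :
    Kminus X D s = 1 := by
  rw [Kminus, h, Finset.prod_empty]

lemma Yat_eq_card_of_filter_lt_eq_empty {s : ℝ} (h : (times X).filter (· < s) = ∅) :
    Yat X s = n := by
  have hle : ∀ i, s ≤ X i := fun i =>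
    not_lt.mp fun hi => by
      simpa [h] using (Finset.mem_filter.mpr ⟨mem_times i, hi⟩ : X i ∈ (times X).filter (· < s))
  simp [Yat, hle]

lemma Yat_antitone : Antitone (Yat X) := fun _ _ hst => by
  unfold Yat
  exact_mod_cast Finset.card_le_card (Finset.monotone_filter_right _ fun _ _ => hst.trans)

variable {s a : ℝ} {T : Finset ℝ}

lemma lt_of_filter_lt_eq_insert (h : (times X).filter (· < s) = insert a T) : a < s :=
  (Finset.mem_filter.mp (h ▸ Finset.mem_insert_self a T : a ∈ (times X).filter (· < s))).2

lemma filter_lt_eq_of_filter_lt_eq_insert (h : (times X).filter (· < s) = insert a T)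
    (hT : ∀ x ∈ T, x < a) : (times X).filter (· < a) = T := by
  ext u
  constructor
  · intro hu
    obtain ⟨hut, hua⟩ := Finset.mem_filter.mp hu
    have : u ∈ insert a T :=
      h ▸ Finset.mem_filter.mpr ⟨hut, hua.trans (lt_of_filter_lt_eq_insert h)⟩
    exact (Finset.mem_insert.mp this).resolve_left hua.ne
  · intro hu
    have : u ∈ (times X).filter (· < s) := h ▸ Finset.mem_insert_of_mem hu
    exact Finset.mem_filter.mpr ⟨(Finset.mem_filter.mp this).1, hT u hu⟩

lemma Yat_eq_Yplus_of_filter_lt_eq_insert (h : (times X).filter (· < s) = insert a T)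
    (hT : ∀ x ∈ T, x < a) : Yat X s = Yplus X a := by
  unfold Yat Yplus
  congr 2
  refine Finset.filter_congr fun i _ =>
    ⟨(lt_of_filter_lt_eq_insert h).trans_le, fun hai => not_lt.mp fun his => ?_⟩
  have : X i ∈ insert a T := h ▸ Finset.mem_filter.mpr ⟨mem_times i, his⟩
  rcases Finset.mem_insert.mp this with hia | hiT
  · exact hai.ne' hia
  · exact (hT _ hiT).not_gt hai

lemma Kminus_eq_of_filter_lt_eq_insert (h : (times X).filter (· < s) = insert a T)
    (hT : ∀ x ∈ T, x < a) :
    Kminus X D s = (1 - dC X D a / Ydag X D a) * Kminus X D a := by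
  rw [Kminus, Kminus, h, filter_lt_eq_of_filter_lt_eq_insert h hT,
    Finset.prod_insert fun haT => (hT a haT).false]

/- The right-hand side is `1 − Ŝ(s−)` for the Kaplan–Meier estimator `Ŝ`, by the identity
`n K̂(s−) Ŝ(s−) = Y(s)`. Passing an observed time `a` multiplies `K̂` by `Y(a+)/Y†(a)`, and that is
what makes the induction step close. -/
lemma sum_filter_lt_Jw_mul_dN (hn : 0 < n) (hs : 0 < Yat X s) :
    ∑ v ∈ (times X).filter (· < s), Jw X D v * dN X D v = 1 - Jw X D s * Yat X s := by
  induction hT : (times X).filter (· < s) using Finset.induction_on_max generalizing s with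
  | empty =>
    have hn' : (n : ℝ) ≠ 0 := by positivity
    rw [Finset.sum_empty, Jw, Kminus_eq_one_of_filter_lt_eq_empty hT,
      Yat_eq_card_of_filter_lt_eq_empty hT, mul_one, one_div_mul_cancel hn', sub_self]
  | insert a T hTa ih =>
    have hYplus : 0 < Yplus X a := Yat_eq_Yplus_of_filter_lt_eq_insert hT hTa ▸ hs
    have hYdag : 0 < Ydag X D a := by
      rw [Ydag_eq_Yplus_add_dC]
      have : 0 ≤ dC X D a := by unfold dC; positivity
      linarith
    have hstep : Jw X D s * Yat X s = Jw X D a * Ydag X D a := by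
      rw [Yat_eq_Yplus_of_filter_lt_eq_insert hT hTa, Jw, Jw,
        Kminus_eq_of_filter_lt_eq_insert hT hTa, one_sub_dC_div_Ydag hYdag.ne']
      field_simp
    rw [Finset.sum_insert fun haT => (hTa a haT).false,
      ih (hs.trans_le ?_) (filter_lt_eq_of_filter_lt_eq_insert hT hTa), hstep, Ydag]
    · ring
    · exact Yat_antitone (lt_of_filter_lt_eq_insert hT).le

lemma sum_Jw_mul_dN_eq_one (hn : 0 < n) (hτ : dN X D (tau X) = Yat X (tau X)) :
    ∑ v ∈ times X, Jw X D v * dN X D v = 1 := by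
  have herase : (times X).erase (tau X) = (times X).filter (· < tau X) := by
    ext v
    simp only [Finset.mem_erase, Finset.mem_filter]
    exact ⟨fun ⟨hne, hv⟩ => ⟨hv, (le_tau hv).lt_of_ne hne⟩, fun ⟨hv, hlt⟩ => ⟨hlt.ne, hv⟩⟩
  rw [← Finset.add_sum_erase _ _ (tau_mem hn), herase,
    sum_filter_lt_Jw_mul_dN hn (Yat_pos_of_mem (tau_mem hn)), hτ]
  ring

lemma FIPCW_add_SIPCW (hn : 0 < n) (hτ : dN X D (tau X) = Yat X (tau X)) (t : ℝ) :
    FIPCW X D t + SIPCW X D t = 1 := by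
  rw [FIPCW_eq_sum, SIPCW_eq_sum, ← sum_Jw_mul_dN_eq_one hn hτ,
    ← Finset.sum_filter_add_sum_filter_not (times X) (· ≤ t)]
  simp only [not_le]

lemma one_sub_SRTTR (t : ℝ) (h : t < tau X ∨ dN X D (tau X) = Yat X (tau X)) :
    1 - SRTTR X D t = FIPCW X D t := by
  rw [SRTTR, sub_sub_cancel, FIPCW_eq_sum]
  refine Finset.sum_congr rfl fun v hv => ?_
  obtain ⟨hvt, hvtimes⟩ := And.symm (Finset.mem_filter.mp hv)
  rcases (le_tau hvtimes).lt_or_eq with hlt | heq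
  · simp [hlt, hlt.ne]
  · have hτ : dN X D (tau X) = Yat X (tau X) := h.resolve_left (heq ▸ hvt).not_gt
    simp [heq, hτ]

end Estimators

theorem stmt18_general (n : ℕ) (hn : 0 < n) (X : Fin n → ℝ) (D : Fin n → Bool) :
    (∀ t : ℝ, 0 ≤ t → t < tau X → 1 - SRTTR X D t = FIPCW X D t)
    ∧ (dN X D (tau X) = Yat X (tau X) →
        ∀ t : ℝ, 0 ≤ t →
          1 - SRTTR X D t = FIPCW X D t ∧ SRTTR X D t = SIPCW X D t) := by
  refine ⟨fun t _ ht => one_sub_SRTTR t (Or.inl ht), fun hτ t _ => ?_⟩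
  have hF := one_sub_SRTTR t (Or.inr hτ)
  exact ⟨hF, by linarith [FIPCW_add_SIPCW hn hτ t]⟩

/-- RTTR is an IPCW estimator: for `0 ≤ t < τ`,
`1 − Ŝ_RTTR(t) = F̂_IPCW(t)`; moreover, if `ΔN(τ) = Y(τ)`, then for every `t ≥ 0`,
`1 − Ŝ_RTTR(t) = F̂_IPCW(t)` and `Ŝ_RTTR(t) = S̃_IPCW(t)`. -/
theorem stmt18 (n : ℕ) (hn : 0 < n) (X : Fin n → ℝ) (D : Fin n → Bool)
    (hX : ∀ i, 0 < X i) :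
    (∀ t : ℝ, 0 ≤ t → t < tau X → 1 - SRTTR X D t = FIPCW X D t)
    ∧ (dN X D (tau X) = Yat X (tau X) →
        ∀ t : ℝ, 0 ≤ t →
          1 - SRTTR X D t = FIPCW X D t ∧ SRTTR X D t = SIPCW X D t) :=
  stmt18_general n hn X D

end SurvStmt
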